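/- For every α ∈ ℂ, the standard operators E, F, H, K on the r-dimensional space V_α satisfy all defining relations of the unrolled restricted quantum group: K is invertible, KE = q²EK, KF = q^{−2}FK, HK = KH, HE − EH = 2E, HF − FH = −2F, EF − FE = (K − K^{−1})/(q − q^{−1}), and E^r = F^r = 0. -/

import Mathlib

/-- `q^z = exp(iπz/r)` for `q = exp(iπ/r)`. -/
noncomputable def qexp (r : ℕ) (z : ℂ) : ℂ := Complex.exp (Real.pi * Complex.I * z / r)

/-- The quantum bracket `{z} = q^z - q^{-z}`. -/
noncomputable def qbr (r : ℕ) (z : ℂ) : ℂ := qexp r z - qexp r (-z)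

/-- The quantum number `[z] = {z}/{1}`. -/
noncomputable def qnum (r : ℕ) (z : ℂ) : ℂ := qbr r z / qbr r 1

/-- `H` on the typical module `V_α`: `H v_k = (α+r−1−2k) v_k`. -/
noncomputable def HV (r : ℕ) (α : ℂ) : Matrix (Fin r) (Fin r) ℂ :=
  Matrix.diagonal fun k => α + (r : ℂ) - 1 - 2 * ((k : ℕ) : ℂ)

/-- `K` on `V_α`: `K v_k = q^{α+r−1−2k} v_k`. -/
noncomputable def KV (r : ℕ) (α : ℂ) : Matrix (Fin r) (Fin r) ℂ :=
  Matrix.diagonal fun k => qexp r (α + (r : ℂ) - 1 - 2 * ((k : ℕ) : ℂ))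

/-- `E` on `V_α`: `E v_k = [k][k−α] v_{k−1}`, `E v_0 = 0`. -/
noncomputable def EV (r : ℕ) (α : ℂ) : Matrix (Fin r) (Fin r) ℂ :=
  Matrix.of fun p p' =>
    if (p : ℕ) + 1 = (p' : ℕ) then
      qnum r (((p' : ℕ) : ℂ)) * qnum r ((((p' : ℕ) : ℂ)) - α)
    else 0

/-- `F` on `V_α`: `F v_k = v_{k+1}`, `F v_{r−1} = 0`. -/
noncomputable def FV (r : ℕ) : Matrix (Fin r) (Fin r) ℂ :=
  Matrix.of fun p p' => if (p : ℕ) = (p' : ℕ) + 1 then 1 else 0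

/- ### Auxiliary lemmas -/

lemma qexp_add (r : ℕ) (z w : ℂ) : qexp r (z + w) = qexp r z * qexp r w := by
  rw [qexp, qexp, qexp, ← Complex.exp_add]; congr 1; ring

lemma qexp_ne_zero (r : ℕ) (z : ℂ) : qexp r z ≠ 0 := Complex.exp_ne_zero _

lemma qexp_zero (r : ℕ) : qexp r 0 = 1 := by simp [qexp]

lemma qexp_neg (r : ℕ) (z : ℂ) : qexp r (-z) = (qexp r z)⁻¹ := by
  refine eq_inv_of_mul_eq_one_left ?_
  rw [← qexp_add]; simp [qexp_zero]

lemma qexp_sub (r : ℕ) (z w : ℂ) : qexp r (z - w) = qexp r z / qexp r w := by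
  rw [sub_eq_add_neg, qexp_add, qexp_neg, div_eq_mul_inv]

lemma qexp_r (r : ℕ) (hr : r ≠ 0) : qexp r (r : ℂ) = -1 := by
  have hr0 : (r : ℂ) ≠ 0 := Nat.cast_ne_zero.mpr hr
  have : (Real.pi : ℂ) * Complex.I * r / r = Real.pi * Complex.I := by field_simp
  rw [qexp, this, Complex.exp_pi_mul_I]

lemma qone_ne (r : ℕ) (hr : 2 ≤ r) : qexp r 1 - qexp r (-1) ≠ 0 := by
  intro h
  rw [sub_eq_zero, qexp, qexp, Complex.exp_eq_exp_iff_exists_int] at h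
  obtain ⟨n, hn⟩ := h
  have hr0 : (r : ℂ) ≠ 0 := Nat.cast_ne_zero.mpr (by omega)
  have hπ : (Real.pi : ℂ) ≠ 0 := by exact_mod_cast Real.pi_ne_zero
  have hI := Complex.I_ne_zero
  field_simp at hn
  have h3 : ((n : ℂ) * r) = 1 := by
    apply mul_left_cancel₀ (show (2:ℂ) * Real.pi * Complex.I ≠ 0 by
      exact mul_ne_zero (mul_ne_zero two_ne_zero hπ) hI)
    linear_combination (-(Real.pi:ℂ) * Complex.I) * hn
  have h4 : (n * (r:ℤ)) = 1 := by exact_mod_cast h3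
  have h5 : (r : ℤ) ≤ 1 := Int.le_of_dvd one_pos ⟨n, by linear_combination -h4⟩
  omega

lemma qnum_zero (r : ℕ) : qnum r 0 = 0 := by
  simp [qnum, qbr]

lemma qnum_r (r : ℕ) (hr : r ≠ 0) : qnum r (r : ℂ) = 0 := by
  rw [qnum, qbr, qexp_neg, qexp_r r hr]
  norm_num

lemma key (r : ℕ) (hr : 2 ≤ r) (α k : ℂ) :
    qnum r (k+1) * qnum r (k+1-α) - qnum r k * qnum r (k-α)
    = (qexp r 1 - qexp r (-1))⁻¹ *
      (qexp r (α+(r:ℂ)-1-2*k) - qexp r (-(α+(r:ℂ)-1-2*k))) := by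
  have hrne : r ≠ 0 := by omega
  have ha := qexp_ne_zero r α
  have ht := qexp_ne_zero r k
  have hu := qexp_ne_zero r 1
  have e1 : qexp r (k+1) = qexp r k * qexp r 1 := qexp_add r k 1
  have e2 : qexp r (-(k+1)) = (qexp r k)⁻¹ * (qexp r 1)⁻¹ := by
    rw [show -(k+1) = -k + -1 from by ring, qexp_add, qexp_neg, qexp_neg]
  have e3 : qexp r (k+1-α) = qexp r k * qexp r 1 * (qexp r α)⁻¹ := by
    rw [show k+1-α = k + 1 + -α from by ring, qexp_add, qexp_add, qexp_neg]
  have e4 : qexp r (-(k+1-α)) = (qexp r k)⁻¹ * (qexp r 1)⁻¹ * qexp r α := by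
    rw [show -(k+1-α) = -k + -1 + α from by ring, qexp_add, qexp_add, qexp_neg, qexp_neg]
  have e5 : qexp r (k-α) = qexp r k * (qexp r α)⁻¹ := by
    rw [show k-α = k + -α from by ring, qexp_add, qexp_neg]
  have e6 : qexp r (-(k-α)) = (qexp r k)⁻¹ * qexp r α := by
    rw [show -(k-α) = -k + α from by ring, qexp_add, qexp_neg]
  have e7 : qexp r (α+(r:ℂ)-1-2*k)
      = -(qexp r α * (qexp r 1)⁻¹ * (qexp r k)⁻¹ * (qexp r k)⁻¹) := by
    rw [show α+(r:ℂ)-1-2*k = (r:ℂ) + (α + -1 + -k + -k) from by ring,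
      qexp_add, qexp_add, qexp_add, qexp_add, qexp_neg, qexp_neg,
      qexp_r r hrne]
    ring
  have e8 : qexp r (-(α+(r:ℂ)-1-2*k))
      = -((qexp r α)⁻¹ * qexp r 1 * qexp r k * qexp r k) := by
    rw [show -(α+(r:ℂ)-1-2*k) = -α + 1 + k + k + -(r:ℂ) from by ring,
      qexp_add, qexp_add, qexp_add, qexp_add, qexp_neg, qexp_neg,
      qexp_r r hrne]
    ring
  have h1 : qexp r 1 - (qexp r 1)⁻¹ ≠ 0 := by
    have := qone_ne r hr; rwa [qexp_neg] at this
  have huu : qexp r 1 * qexp r 1 - 1 ≠ 0 := by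
    intro h
    apply h1
    field_simp
    linear_combination h
  simp only [qnum, qbr, e1, e2, e3, e4, e5, e6, e7, e8, qexp_neg r 1, qexp_neg r k]
  rw [div_mul_div_comm, div_mul_div_comm, div_sub_div_same,
    div_eq_iff (mul_ne_zero h1 h1)]
  field_simp
  ring

lemma KV_mul_inv (r : ℕ) (α : ℂ) :
    KV r α * Matrix.diagonal
      (fun k : Fin r => qexp r (-(α + (r:ℂ) - 1 - 2 * ((k:ℕ):ℂ)))) = 1 := by
  rw [KV, Matrix.diagonal_mul_diagonal]
  have : (fun k : Fin r => qexp r (α + (r:ℂ) - 1 - 2 * ((k:ℕ):ℂ)) *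
      qexp r (-(α + (r:ℂ) - 1 - 2 * ((k:ℕ):ℂ)))) = fun _ => (1:ℂ) := by
    funext k; rw [← qexp_add]; simp [qexp_zero]
  rw [this, Matrix.diagonal_one]

lemma KV_inv_mul (r : ℕ) (α : ℂ) :
    Matrix.diagonal
      (fun k : Fin r => qexp r (-(α + (r:ℂ) - 1 - 2 * ((k:ℕ):ℂ)))) * KV r α = 1 := by
  rw [KV, Matrix.diagonal_mul_diagonal]
  have : (fun k : Fin r => qexp r (-(α + (r:ℂ) - 1 - 2 * ((k:ℕ):ℂ))) *
      qexp r (α + (r:ℂ) - 1 - 2 * ((k:ℕ):ℂ))) = fun _ => (1:ℂ) := by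
    funext k; rw [← qexp_add]; simp [qexp_zero]
  rw [this, Matrix.diagonal_one]

lemma KV_inv (r : ℕ) (α : ℂ) :
    (KV r α)⁻¹ = Matrix.diagonal
      (fun k : Fin r => qexp r (-(α + (r:ℂ) - 1 - 2 * ((k:ℕ):ℂ)))) :=
  Matrix.inv_eq_right_inv (KV_mul_inv r α)

lemma upper_pow_zero {n : ℕ} (M : Matrix (Fin n) (Fin n) ℂ)
    (h : ∀ i j : Fin n, (j:ℕ) ≤ (i:ℕ) → M i j = 0) : M ^ n = 0 := by
  have aux : ∀ m (i j : Fin n), (j:ℕ) < (i:ℕ) + m → (M ^ m) i j = 0 := by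
    intro m
    induction m with
    | zero =>
      intro i j hij
      rw [pow_zero, Matrix.one_apply_ne]
      intro e; rw [e] at hij; omega
    | succ m ih =>
      intro i j hij
      rw [pow_succ', Matrix.mul_apply]
      apply Finset.sum_eq_zero
      intro k _
      by_cases hk : (k:ℕ) ≤ (i:ℕ)
      · rw [h i k hk, zero_mul]
      · rw [ih k j (by omega), mul_zero]
  ext i j
  rw [Matrix.zero_apply]
  have := j.isLt
  exact aux n i j (by omega)

/-- The standard operators on `V_α` satisfy all defining relations of `U̅_q^H(sl₂)`. -/
theorem stmt7 (r : ℕ) (hr : 2 ≤ r) (α : ℂ) :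
    IsUnit (KV r α) ∧
    KV r α * EV r α = qexp r 2 • (EV r α * KV r α) ∧
    KV r α * FV r = qexp r (-2) • (FV r * KV r α) ∧
    HV r α * KV r α = KV r α * HV r α ∧
    HV r α * EV r α - EV r α * HV r α = (2 : ℂ) • EV r α ∧
    HV r α * FV r - FV r * HV r α = (-2 : ℂ) • FV r ∧
    EV r α * FV r - FV r * EV r α
      = (qexp r 1 - qexp r (-1))⁻¹ • (KV r α - (KV r α)⁻¹) ∧
    EV r α ^ r = 0 ∧ FV r ^ r = 0 := by
  have hrne : r ≠ 0 := by omega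
  refine ⟨?_, ?_, ?_, ?_, ?_, ?_, ?_, ?_, ?_⟩
  · exact ⟨⟨KV r α, _, KV_mul_inv r α, KV_inv_mul r α⟩, rfl⟩
  · ext i j
    simp only [KV, EV, Matrix.diagonal_mul, Matrix.mul_diagonal,
      Matrix.smul_apply, Matrix.of_apply, smul_eq_mul]
    split_ifs with h
    · rw [show ((j:ℕ):ℂ) = ((i:ℕ):ℂ) + 1 from by exact_mod_cast h.symm,
        show α + (r:ℂ) - 1 - 2*((i:ℕ):ℂ) = 2 + (α + (r:ℂ) - 1 - 2*(((i:ℕ):ℂ)+1)) from by ring,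
        qexp_add]
      ring
    · ring
  · ext i j
    simp only [KV, FV, Matrix.diagonal_mul, Matrix.mul_diagonal,
      Matrix.smul_apply, Matrix.of_apply, smul_eq_mul]
    split_ifs with h
    · rw [show ((i:ℕ):ℂ) = ((j:ℕ):ℂ) + 1 from by exact_mod_cast h,
        show α + (r:ℂ) - 1 - 2*(((j:ℕ):ℂ)+1) = -2 + (α + (r:ℂ) - 1 - 2*((j:ℕ):ℂ)) from by ring,
        qexp_add]
      ring
    · ring
  · ext i j
    simp only [HV, KV, Matrix.diagonal_mul_diagonal, Matrix.diagonal_apply]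
    split_ifs with h
    · ring
    · rfl
  · ext i j
    simp only [HV, EV, Matrix.sub_apply, Matrix.diagonal_mul, Matrix.mul_diagonal,
      Matrix.smul_apply, Matrix.of_apply, smul_eq_mul]
    split_ifs with h
    · rw [show ((j:ℕ):ℂ) = ((i:ℕ):ℂ) + 1 from by exact_mod_cast h.symm]
      ring
    · ring
  · ext i j
    simp only [HV, FV, Matrix.sub_apply, Matrix.diagonal_mul, Matrix.mul_diagonal,
      Matrix.smul_apply, Matrix.of_apply, smul_eq_mul]
    split_ifs with h
    · rw [show ((i:ℕ):ℂ) = ((j:ℕ):ℂ) + 1 from by exact_mod_cast h]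
      ring
    · ring
  · ext i j
    rw [KV_inv]
    by_cases hij : i = j
    · subst hij
      rw [Matrix.sub_apply, Matrix.mul_apply, Matrix.mul_apply, Matrix.smul_apply,
        Matrix.sub_apply, KV, Matrix.diagonal_apply_eq, Matrix.diagonal_apply_eq]
      have hEF : (∑ k : Fin r, EV r α i k * FV r k i)
          = qnum r (((i:ℕ):ℂ)+1) * qnum r ((((i:ℕ):ℂ)+1) - α) := by
        by_cases h1 : (i:ℕ)+1 < r
        · rw [Finset.sum_eq_single (⟨(i:ℕ)+1, h1⟩ : Fin r)]
          · simp only [EV, FV, Matrix.of_apply]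
            norm_num
          · intro k _ hk
            simp only [EV, FV, Matrix.of_apply]
            have : ¬ ((i:ℕ)+1 = (k:ℕ)) := by
              intro e; exact hk (by apply Fin.ext; simp [← e])
            simp [this]
          · intro habs; exact absurd (Finset.mem_univ _) habs
        · have hir : (i:ℕ)+1 = r := by omega
          have hz : qnum r (((i:ℕ):ℂ)+1) = 0 := by
            rw [show ((i:ℕ):ℂ)+1 = ((r:ℕ):ℂ) from by exact_mod_cast hir]
            exact qnum_r r hrne
          rw [hz, zero_mul]
          apply Finset.sum_eq_zero
          intro k _
          simp only [EV, FV, Matrix.of_apply]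
          have : ¬ ((i:ℕ)+1 = (k:ℕ)) := by omega
          simp [this]
      have hFE : (∑ k : Fin r, FV r i k * EV r α k i)
          = qnum r ((i:ℕ):ℂ) * qnum r (((i:ℕ):ℂ) - α) := by
        by_cases h2 : 0 < (i:ℕ)
        · rw [Finset.sum_eq_single (⟨(i:ℕ)-1, by omega⟩ : Fin r)]
          · simp only [EV, FV, Matrix.of_apply]
            have c1 : ((i:ℕ) = (i:ℕ)-1+1) := by omega
            simp [c1.symm, ← c1]
          · intro k _ hk
            simp only [EV, FV, Matrix.of_apply]
            have : ¬ ((i:ℕ) = (k:ℕ)+1) := by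
              intro e; exact hk (by apply Fin.ext; simp; omega)
            simp [this]
          · intro habs; exact absurd (Finset.mem_univ _) habs
        · have hz : qnum r ((i:ℕ):ℂ) = 0 := by
            have : ((i:ℕ):ℂ) = 0 := by exact_mod_cast (by omega : (i:ℕ) = 0)
            rw [this]; exact qnum_zero r
          rw [hz, zero_mul]
          apply Finset.sum_eq_zero
          intro k _
          simp only [EV, FV, Matrix.of_apply]
          have : ¬ ((i:ℕ) = (k:ℕ)+1) := by omega
          simp [this]
      rw [hEF, hFE, smul_eq_mul]
      exact key r hr α ((i:ℕ):ℂ)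
    · rw [Matrix.sub_apply, Matrix.mul_apply, Matrix.mul_apply, Matrix.smul_apply,
        Matrix.sub_apply, KV, Matrix.diagonal_apply_ne _ hij, Matrix.diagonal_apply_ne _ hij]
      have hv : (i:ℕ) ≠ (j:ℕ) := fun e => hij (Fin.ext e)
      have z1 : (∑ k : Fin r, EV r α i k * FV r k j) = 0 := by
        apply Finset.sum_eq_zero
        intro k _
        simp only [EV, FV, Matrix.of_apply]
        split_ifs with a b
        · omega
        · exact mul_zero _
        · exact zero_mul _
        · exact zero_mul _
      have z2 : (∑ k : Fin r, FV r i k * EV r α k j) = 0 := by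
        apply Finset.sum_eq_zero
        intro k _
        simp only [EV, FV, Matrix.of_apply]
        split_ifs with a b
        · omega
        · exact mul_zero _
        · exact zero_mul _
        · exact zero_mul _
      rw [z1, z2]
      simp
  · apply upper_pow_zero
    intro i j hij
    simp only [EV, Matrix.of_apply]
    have : ¬ ((i:ℕ)+1 = (j:ℕ)) := by omega
    simp [this]
  · have hT : (Matrix.transpose (FV r)) ^ r = 0 := by
      apply upper_pow_zero
      intro i j hij
      simp only [FV, Matrix.transpose_apply, Matrix.of_apply]
      have : ¬ ((j:ℕ) = (i:ℕ)+1) := by omega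
      simp [this]
    have := congrArg Matrix.transpose hT
    rwa [← Matrix.transpose_pow, Matrix.transpose_transpose, Matrix.transpose_zero] at this
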